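/- For the Fibonacci substitution φ : a ↦ ab, b ↦ a with fixed point u starting at a, the Dumont–Thomas representation of n ≥ 1 (the word |m_{k-1}|···|m_0| from the unique a-admissible decomposition of the prefix of length n of u with m_{k-1} ≠ ε) is exactly the Zeckendorf representation of n: a word over {0,1} starting with 1, containing no factor 11, with value Σ_i w_i F_{i+2} = n where F_2 = 1, F_3 = 2, F_4 = 3, ... are Fibonacci numbers. -/

import Mathlib

/-- `substApp μ n w` is `μ^n(w)`: the `n`-fold application of the substitution `μ`
(extended to words by concatenation) to the word `w`. -/
def substApp {A : Type*} (μ : A → List A) (n : ℕ) (w : List A) : List A :=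
  (fun v => v.flatMap μ)^[n] w

/-- A sequence `((m_i, a_i))_{i=0,...,k-1}` is admissible with respect to `μ` if
`m_{i-1} a_{i-1}` is a prefix of `μ(a_i)` for every `1 ≤ i ≤ k-1`. -/
def Admissible {A : Type*} (μ : A → List A) (k : ℕ) (s : Fin k → List A × A) : Prop :=
  ∀ i : Fin k, 0 < i.val →
    ((s ⟨i.val - 1, by have := i.isLt; omega⟩).1 ++
      [(s ⟨i.val - 1, by have := i.isLt; omega⟩).2]) <+: μ (s i).2

/-- A sequence `((m_i, a_i))_{i=0,...,k-1}` is `a`-admissible with respect to `μ`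
if it is admissible and moreover `m_{k-1} a_{k-1}` is a prefix of `μ(a)`. -/
def LetterAdmissible {A : Type*} (μ : A → List A) (a : A) (k : ℕ)
    (s : Fin k → List A × A) : Prop :=
  Admissible μ k s ∧ ∀ h : 0 < k,
    ((s ⟨k - 1, by omega⟩).1 ++ [(s ⟨k - 1, by omega⟩).2]) <+: μ a

/-- The word `μ^{k-1}(m_{k-1}) · μ^{k-2}(m_{k-2}) ⋯ μ^0(m_0)` associated with a
sequence `((m_i, a_i))_{i=0,...,k-1}`. -/
def dtProd {A : Type*} (μ : A → List A) (k : ℕ) (s : Fin k → List A × A) : List A :=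
  ((List.ofFn fun i : Fin k => substApp μ i.val (s i).1)).reverse.flatten

/-- The Fibonacci substitution `φ : a ↦ ab, b ↦ a` on `{a,b} = Fin 2`. -/
def fibSub : Fin 2 → List (Fin 2) := ![[0, 1], [0]]

/-!
Since `φ(a) = ab` and `φ(b) = a`, if `m c` is a prefix of some `φ(d)` then either `m = ε`,
or `m = a` and `c = b`. So every digit `|m_i|` is `0` or `1`; a digit `1` at position
`i + 1` forces `a_{i+1} = b`, and then `m_i a_i` is a prefix of `φ(b) = a`, so the digit at `i`
is `0`. Finally `|φ^i(a)| = F_{i+2}`, so the length of the decomposed prefix is the Zeckendorf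
value of the digits.
-/

section Substitution

variable {A : Type*} (μ : A → List A)

lemma substApp_succ (n : ℕ) (w : List A) :
    substApp μ (n + 1) w = substApp μ n (w.flatMap μ) := by
  simp [substApp, Function.iterate_succ_apply]

lemma substApp_append (n : ℕ) (xs ys : List A) :
    substApp μ n (xs ++ ys) = substApp μ n xs ++ substApp μ n ys := by
  induction n generalizing xs ys with
  | zero => rfl
  | succ n ih => simp [substApp_succ, List.flatMap_append, ih]

lemma substApp_nil (n : ℕ) : substApp μ n [] = [] := by
  induction n with
  | zero => rfl
  | succ n ih => simp [substApp_succ, ih]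

lemma length_dtProd (k : ℕ) (s : Fin k → List A × A) :
    (dtProd μ k s).length = ∑ i : Fin k, (substApp μ i (s i).1).length := by
  simp [dtProd, List.length_flatten, List.map_reverse, List.sum_reverse, List.sum_ofFn]

lemma Admissible.prefix_succ {k : ℕ} {s : Fin k → List A × A} (hs : Admissible μ k s)
    (i : Fin k) (hi : i.val + 1 < k) :
    (s i).1 ++ [(s i).2] <+: μ (s ⟨i.val + 1, hi⟩).2 :=
  hs ⟨i.val + 1, hi⟩ (Nat.succ_pos _)

lemma LetterAdmissible.exists_prefix {a : A} {k : ℕ} {s : Fin k → List A × A}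
    (hs : LetterAdmissible μ a k s) (i : Fin k) :
    ∃ c, (s i).1 ++ [(s i).2] <+: μ c := by
  by_cases hi : i.val + 1 < k
  · exact ⟨_, hs.1.prefix_succ μ i hi⟩
  · have hlast : (⟨k - 1, by omega⟩ : Fin k) = i := Fin.ext (by simp; omega)
    exact ⟨a, hlast ▸ hs.2 (by omega)⟩

end Substitution

lemma length_substApp_fibSub (n : ℕ) :
    (substApp fibSub n [0]).length = Nat.fib (n + 2) ∧
      (substApp fibSub n [1]).length = Nat.fib (n + 1) := by
  induction n with
  | zero => simp [substApp]
  | succ n ih =>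
    have h0 : substApp fibSub (n + 1) [0] = substApp fibSub n [0] ++ substApp fibSub n [1] := by
      rw [substApp_succ, ← substApp_append]; rfl
    have h1 : substApp fibSub (n + 1) [1] = substApp fibSub n [0] := by
      rw [substApp_succ]; rfl
    rw [h0, h1, List.length_append, ih.1, ih.2, Nat.fib_add_two (n := n + 1)]
    exact ⟨by ring, rfl⟩

lemma fibSub_prefix_cases {m : List (Fin 2)} {a c : Fin 2} (h : m ++ [a] <+: fibSub c) :
    m = [] ∨ (m = [0] ∧ a = 1) := by
  match m, h.length_le with
  | [], _ => exact .inl rfl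
  | [x], _ => fin_cases x <;> fin_cases a <;> fin_cases c <;> revert h <;> decide
  | _ :: _ :: _, hl => fin_cases c <;> simp [fibSub] at hl

lemma eq_nil_of_prefix_fibSub_one {m : List (Fin 2)} {a : Fin 2} (h : m ++ [a] <+: fibSub 1) :
    m = [] :=
  List.length_eq_zero_iff.mp (by simpa [fibSub] using h.length_le)

theorem stmt16 (u : ℕ → Fin 2)
    (n : ℕ) (k : ℕ) (s : Fin k → List (Fin 2) × Fin 2)
    (hadm : LetterAdmissible fibSub 0 k s)
    (htop : ∀ h : 0 < k, (s ⟨k - 1, by omega⟩).1 ≠ [])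
    (hdec : List.ofFn (fun i : Fin n => u i.val) = dtProd fibSub k s) :
    (∀ i : Fin k, (s i).1.length ≤ 1) ∧
    (∀ h : 0 < k, (s ⟨k - 1, by omega⟩).1.length = 1) ∧
    (∀ i : Fin k, ∀ hi : i.val + 1 < k,
        ¬((s i).1.length = 1 ∧ (s ⟨i.val + 1, hi⟩).1.length = 1)) ∧
    n = ∑ i : Fin k, (s i).1.length * Nat.fib (i.val + 2) := by
  have digit (i : Fin k) : (s i).1 = [] ∨ ((s i).1 = [0] ∧ (s i).2 = 1) :=
    have ⟨_, h⟩ := hadm.exists_prefix fibSub i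
    fibSub_prefix_cases h
  refine ⟨fun i => ?_, fun hk => ?_, fun i hi ⟨hi1, hsucc1⟩ => ?_, ?_⟩
  · rcases digit i with h | ⟨h, _⟩ <;> simp [h]
  · rcases digit ⟨k - 1, by omega⟩ with h | ⟨h, _⟩
    · exact absurd h (htop hk)
    · simp [h]
  · obtain ⟨-, hb⟩ := (digit ⟨i.val + 1, hi⟩).resolve_left fun h => by simp [h] at hsucc1
    have hnil := eq_nil_of_prefix_fibSub_one (hb ▸ hadm.1.prefix_succ fibSub i hi)
    simp [hnil] at hi1
  · rw [← List.length_ofFn (f := fun i : Fin n => u i.val), hdec, length_dtProd]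
    refine Finset.sum_congr rfl fun i _ => ?_
    rcases digit i with h | ⟨h, _⟩
    · simp [h, substApp_nil]
    · simp [h, (length_substApp_fibSub i).1]
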